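/- arXiv:2207.11200 — 4 statements merged into one kernel-verified Lean document; each statement's English description precedes it below -/
import Mathlib

section
/- For every natural number m ≥ 1, the sum of F_i·F_{i+1}/(L_i·L_{i+1}) for i from 1 to m equals ((m+1)·L_{m+1} − F_{m+1})/(5·L_{m+1}), where the identity is taken in the rational numbers. -/
/-- The n-th Lucas number, defined for `n ≥ 1` by `L n = F (n-1) + F (n+1)`. -/
def lucas (n : ℕ) : ℕ := Nat.fib (n - 1) + Nat.fib (n + 1)

theorem sum_fib_div_lucas (m : ℕ) (hm : 1 ≤ m) :
    ∑ i ∈ Finset.Icc 1 m,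
        ((Nat.fib i : ℚ) * Nat.fib (i + 1)) / ((lucas i : ℚ) * lucas (i + 1)) =
      ((m + 1) * (lucas (m + 1) : ℚ) - Nat.fib (m + 1)) / (5 * (lucas (m + 1) : ℚ)) := by
  induction m, hm using Nat.le_induction with
  | base =>
      norm_num [lucas, Nat.fib]
  | succ m hm ih =>
      rw [Finset.sum_Icc_succ_top (by omega : 1 ≤ m + 1), ih]
      have h1 : lucas (m + 1) = 2 * Nat.fib m + Nat.fib (m + 1) := by
        simp only [lucas, Nat.add_sub_cancel]
        rw [Nat.fib_add_two]
        ring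
      have h2 : lucas (m + 1 + 1) = Nat.fib m + 3 * Nat.fib (m + 1) := by
        simp only [lucas, Nat.add_sub_cancel]
        rw [Nat.fib_add_two, Nat.fib_add_two]
        ring
      have h3 : Nat.fib (m + 1 + 1) = Nat.fib m + Nat.fib (m + 1) := Nat.fib_add_two
      have hb : (0 : ℚ) < Nat.fib (m + 1) := by
        exact_mod_cast Nat.fib_pos.mpr (by omega)
      have ha : (0 : ℚ) ≤ Nat.fib m := by positivity
      rw [h1, h2, h3]
      push_cast
      set a : ℚ := (Nat.fib m : ℚ)
      set b : ℚ := (Nat.fib (m + 1) : ℚ)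
      have d1 : 2 * a + b ≠ 0 := by nlinarith
      have d2 : a + 3 * b ≠ 0 := by nlinarith
      field_simp
      ring
end

section
/- Let F : ℤ → ℤ be the extended Fibonacci function. For all integers n and k with 3 ≤ k ≤ n − 2, the sum over j from 3 to k of (−1)^j · F(n−2j+1) · (F(n) + F(j−2)·F(n−j−1)) equals −F(k−2)·F(k+1)·F(n−k−2)·F(n+1−k). -/
theorem fib_sum_identity (F : ℤ → ℤ)
    (hF0 : F 0 = 0) (hF1 : F 1 = 1) (hFrec : ∀ m : ℤ, F (m + 2) = F (m + 1) + F m)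
    (n k : ℤ) (hk : 3 ≤ k) (hkn : k ≤ n - 2) :
    ∑ j ∈ Finset.Icc (3 : ℤ) k,
        (-1 : ℤ) ^ j.toNat * F (n - 2 * j + 1) * (F n + F (j - 2) * F (n - j - 1)) =
      -(F (k - 2) * F (k + 1) * F (n - k - 2) * F (n + 1 - k)) := by
  have hFm1 : F (-1) = 1 := by
    have h := hFrec (-1); norm_num at h; rw [hF0, hF1] at h; linarith
  have hF2 : F 2 = 1 := by
    have := hFrec 0; norm_num at this; rw [hF0, hF1] at this; linarith
  have addF : ∀ b : ℕ, ∀ a : ℤ, F (a + b) = F b * F (a + 1) + F ((b : ℤ) - 1) * F a := by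
    intro b
    induction b using Nat.twoStepInduction with
    | zero => intro a; norm_num [hF0, hFm1]
    | one => intro a; norm_num [hF0, hF1]
    | more b ih1 ih2 =>
      intro a
      have h1 := ih1 a
      have h2 := ih2 a
      push_cast at h1 h2 ⊢
      rw [show (b:ℤ) + 1 - 1 = (b:ℤ) from by ring] at h2
      have hb1 := hFrec (b : ℤ)
      have hb0 := hFrec ((b : ℤ) - 1)
      rw [show (b:ℤ) - 1 + 2 = (b:ℤ) + 1 from by ring,
        show (b:ℤ) - 1 + 1 = (b:ℤ) from by ring] at hb0
      rw [show a + ((b:ℤ) + 2) = (a + (b:ℤ)) + 2 from by ring, hFrec,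
        show a + (b:ℤ) + 1 = a + ((b:ℤ)+1) from by ring,
        show (b:ℤ) + 2 - 1 = (b:ℤ) + 1 from by ring]
      linear_combination h1 + h2 - F (a+1) * hb1 - F a * hb0
  have subF : ∀ b : ℕ, ∀ a : ℤ,
      F (a - b) = (-1 : ℤ) ^ b * (F ((b : ℤ) + 1) * F a - F b * F (a + 1)) := by
    intro b
    induction b using Nat.twoStepInduction with
    | zero => intro a; norm_num [hF0, hF1]
    | one =>
      intro a
      have h := hFrec (a - 1)
      rw [show a - 1 + 2 = a + 1 from by ring, show a - 1 + 1 = a from by ring] at h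
      norm_num [hF1, hF2]
      linear_combination -h
    | more b ih1 ih2 =>
      intro a
      have h1 := ih1 a
      have h2 := ih2 a
      push_cast at h1 h2 ⊢
      have hrec := hFrec (a - (b : ℤ) - 2)
      rw [show a - (b:ℤ) - 2 + 2 = a - (b:ℤ) from by ring,
        show a - (b:ℤ) - 2 + 1 = a - ((b:ℤ)+1) from by ring] at hrec
      have hb1 := hFrec ((b : ℤ) + 1)
      rw [show (b:ℤ) + 1 + 2 = (b:ℤ) + 2 + 1 from by ring,
        show (b:ℤ) + 1 + 1 = (b:ℤ) + 2 from by ring] at hb1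
      have hb0 := hFrec (b : ℤ)
      rw [show a - ((b:ℤ)+2) = a - (b:ℤ) - 2 from by ring]
      rw [show (-1:ℤ)^(b+2) = (-1)^b from by rw [pow_add]; norm_num]
      rw [show (b:ℤ) + 1 + 1 = (b:ℤ) + 2 from by ring] at h2
      linear_combination -hrec + h1 - h2 - ((-1:ℤ)^b * F a) * hb1 + ((-1:ℤ)^b * F (a+1)) * hb0
  obtain ⟨t, rfl⟩ : ∃ t : ℕ, k = (t : ℤ) + 3 := ⟨(k - 3).toNat, by omega⟩
  clear hk hkn
  induction t with
  | zero =>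
    have hF3 : F 3 = 2 := by
      have h := hFrec 1; norm_num at h; rw [hF2, hF1] at h; linarith
    have hF4 : F 4 = 3 := by
      have h := hFrec 2; norm_num at h; rw [hF3, hF2] at h; linarith
    norm_num
    rw [show Int.toNat 3 = 3 from rfl, show n - 6 + 1 = n - 5 from by ring,
      show n - 3 - 1 = n - 4 from by ring, show n - 3 - 2 = n - 5 from by ring,
      show n + 1 - 3 = n - 2 from by ring, hF1, hF4]
    have e1 := hFrec (n - 2)
    rw [show n - 2 + 2 = n from by ring, show n - 2 + 1 = n - 1 from by ring] at e1
    have e2 := hFrec (n - 3)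
    rw [show n - 3 + 2 = n - 1 from by ring, show n - 3 + 1 = n - 2 from by ring] at e2
    have e3 := hFrec (n - 4)
    rw [show n - 4 + 2 = n - 2 from by ring, show n - 4 + 1 = n - 3 from by ring] at e3
    linear_combination (-(F (n-5))) * (e1 + e2 - e3)
  | succ t ih =>
    push_cast
    rw [show (t:ℤ) + 1 + 3 = (t:ℤ) + 4 from by ring]
    have hsplit : Finset.Icc (3:ℤ) ((t:ℤ) + 4) = insert ((t:ℤ) + 4) (Finset.Icc 3 ((t:ℤ) + 3)) := by
      ext x; simp only [Finset.mem_Icc, Finset.mem_insert]; omega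
    rw [hsplit, Finset.sum_insert (by simp only [Finset.mem_Icc]; omega), ih]
    rw [show ((t:ℤ) + 4).toNat = t + 4 from by omega]
    -- normalize arguments
    rw [show n - 2*((t:ℤ)+4) + 1 = n - 2*(t:ℤ) - 7 from by ring,
      show (t:ℤ) + 4 - 2 = (t:ℤ) + 2 from by ring,
      show n - ((t:ℤ)+4) - 1 = n - (t:ℤ) - 5 from by ring,
      show (t:ℤ) + 3 - 2 = (t:ℤ) + 1 from by ring,
      show (t:ℤ) + 3 + 1 = (t:ℤ) + 4 from by ring,
      show n - ((t:ℤ)+3) - 2 = n - (t:ℤ) - 5 from by ring,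
      show n + 1 - ((t:ℤ)+3) = n - (t:ℤ) - 2 from by ring,
      show (t:ℤ) + 4 + 1 = (t:ℤ) + 5 from by ring,
      show n - ((t:ℤ)+4) - 2 = n - (t:ℤ) - 6 from by ring,
      show n + 1 - ((t:ℤ)+4) = n - (t:ℤ) - 3 from by ring]
    -- facts
    have hn := addF (t + 3) (n - (t:ℤ) - 3)
    push_cast at hn
    rw [show n - (t:ℤ) - 3 + ((t:ℤ) + 3) = n from by ring,
      show (t:ℤ) + 3 - 1 = (t:ℤ) + 2 from by ring,
      show n - (t:ℤ) - 3 + 1 = n - (t:ℤ) - 2 from by ring] at hn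
    have hg := subF (t + 3) (n - (t:ℤ) - 4)
    push_cast at hg
    rw [show n - (t:ℤ) - 4 - ((t:ℤ) + 3) = n - 2*(t:ℤ) - 7 from by ring,
      show (t:ℤ) + 3 + 1 = (t:ℤ) + 4 from by ring,
      show n - (t:ℤ) - 4 + 1 = n - (t:ℤ) - 3 from by ring] at hg
    have he := hFrec ((t:ℤ) + 3)
    rw [show (t:ℤ) + 3 + 2 = (t:ℤ) + 5 from by ring,
      show (t:ℤ) + 3 + 1 = (t:ℤ) + 4 from by ring] at he
    have hd := hFrec ((t:ℤ) + 2)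
    rw [show (t:ℤ) + 2 + 2 = (t:ℤ) + 4 from by ring,
      show (t:ℤ) + 2 + 1 = (t:ℤ) + 3 from by ring] at hd
    have hc := hFrec ((t:ℤ) + 1)
    rw [show (t:ℤ) + 1 + 2 = (t:ℤ) + 3 from by ring,
      show (t:ℤ) + 1 + 1 = (t:ℤ) + 2 from by ring] at hc
    have hx2 := hFrec (n - (t:ℤ) - 4)
    rw [show n - (t:ℤ) - 4 + 2 = n - (t:ℤ) - 2 from by ring,
      show n - (t:ℤ) - 4 + 1 = n - (t:ℤ) - 3 from by ring] at hx2
    have hX := hFrec (n - (t:ℤ) - 5)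
    rw [show n - (t:ℤ) - 5 + 2 = n - (t:ℤ) - 3 from by ring,
      show n - (t:ℤ) - 5 + 1 = n - (t:ℤ) - 4 from by ring] at hX
    have hx5 := hFrec (n - (t:ℤ) - 6)
    rw [show n - (t:ℤ) - 6 + 2 = n - (t:ℤ) - 4 from by ring,
      show n - (t:ℤ) - 6 + 1 = n - (t:ℤ) - 5 from by ring] at hx5
    rw [hn, hg, he, hd, hc, hx2, hX, hx5]
    rcases Nat.even_or_odd t with h | h
    · have hs : (-1:ℤ)^t = 1 := Even.neg_one_pow h
      rw [show ((-1:ℤ))^(t+4) = 1 from by rw [pow_add, hs]; norm_num,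
        show ((-1:ℤ))^(t+3) = -1 from by rw [pow_add, hs]; norm_num]
      ring
    · have hs : (-1:ℤ)^t = -1 := Odd.neg_one_pow h
      rw [show ((-1:ℤ))^(t+4) = -1 from by rw [pow_add, hs]; norm_num,
        show ((-1:ℤ))^(t+3) = 1 from by rw [pow_add, hs]; norm_num]
      ring
end

section
/- Define G_2 : ℚ × ℚ → ℚ by G_2(X,Y) = (9·Y·(X+2)^2 + 8·(X+8)^2)/(X+26)^2. Let c : ℕ → ℚ satisfy c(2) = 1/2 and c(s+1) = G_2(1 − 3/9^{s−1}, c(s)) for every s ≥ 2. Then for every s ≥ 2, c(s) = 1 − N/D, where n = 2(s−2), d = (3^{s−1} − 1)/2, N = (n·3^{n+1})/4 + (5·3^{n+1} + (−1)^n)/16, and D = d^2·(d+1)^2/2, all computed in ℚ. -/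
/-- The row-2 recursion function of the Circuit Array. -/
def G₂ (X Y : ℚ) : ℚ := (9 * Y * (X + 2) ^ 2 + 8 * (X + 8) ^ 2) / (X + 26) ^ 2

/-!
With `b = 9 ^ (s - 2)` the row-0 input is `X = 1 - 1/(3b)`, so `X + 2`, `X + 8`, `X + 26` become
`(9b - 1)/(3b)`, `(27b - 1)/(3b)`, `(81b - 1)/(3b)` and `G₂ X Y = (9Y(9b-1)² + 8(27b-1)²)/(81b-1)²`.
The claimed closed form simplifies to `1 - 2((24(s-2) + 15)b + 1)/(9b - 1)²`, and one step of `G₂`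
turns this shape at `b` into the same shape at `9b`, by a polynomial identity.
-/

lemma G₂_one_sub_one_div {b : ℚ} (hb : b ≠ 0) (Y : ℚ) :
    G₂ (1 - 1 / (3 * b)) Y =
      (9 * Y * (9 * b - 1) ^ 2 + 8 * (27 * b - 1) ^ 2) / (81 * b - 1) ^ 2 := by
  have h : ∀ r : ℚ, 1 - 1 / (3 * b) + r = ((3 * r + 3) * b - 1) / (3 * b) := fun r => by
    field_simp; ring
  rw [G₂, h, h, h, div_pow, div_pow, div_pow]
  field_simp
  ring_nf

lemma G₂_step {b : ℚ} (hb : b ≠ 0) (hb₉ : 9 * b - 1 ≠ 0) (hb₈₁ : 81 * b - 1 ≠ 0) (m : ℚ) :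
    G₂ (1 - 1 / (3 * b)) (1 - 2 * (m * b + 1) / (9 * b - 1) ^ 2) =
      1 - 2 * ((m + 24) * (9 * b) + 1) / (81 * b - 1) ^ 2 := by
  have hY : (1 - 2 * (m * b + 1) / (9 * b - 1) ^ 2) * (9 * b - 1) ^ 2 =
      (9 * b - 1) ^ 2 - 2 * (m * b + 1) := by
    rw [sub_mul, one_mul, div_mul_cancel₀ _ (pow_ne_zero 2 hb₉)]
  rw [G₂_one_sub_one_div hb, mul_assoc 9, hY, div_eq_iff (pow_ne_zero 2 hb₈₁), sub_mul,
    div_mul_cancel₀ _ (pow_ne_zero 2 hb₈₁)]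
  ring

/-- `circuitRow2 k` is the entry `C_{2,k+2}`. -/
def circuitRow2 (k : ℕ) : ℚ := 1 - 2 * ((24 * k + 15) * 9 ^ k + 1) / (9 * 9 ^ k - 1) ^ 2

lemma circuitRow2_succ (k : ℕ) :
    circuitRow2 (k + 1) = G₂ (1 - 3 / 9 ^ (k + 1)) (circuitRow2 k) := by
  have hb : (1 : ℚ) ≤ 9 ^ k := one_le_pow₀ (by norm_num)
  have hX : (1 : ℚ) - 3 / 9 ^ (k + 1) = 1 - 1 / (3 * 9 ^ k) := by
    rw [pow_succ]; field_simp; ring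
  rw [hX, circuitRow2, circuitRow2, G₂_step (by positivity) (by linarith) (by linarith)]
  push_cast
  ring

lemma eq_circuitRow2 (c : ℕ → ℚ) (hc2 : c 2 = 1 / 2)
    (hcrec : ∀ s ≥ 2, c (s + 1) = G₂ (1 - 3 / 9 ^ (s - 1)) (c s)) (k : ℕ) :
    c (k + 2) = circuitRow2 k := by
  induction k with
  | zero => rw [hc2]; norm_num [circuitRow2]
  | succ k ih => rw [hcrec (k + 2) (by omega), ih, circuitRow2_succ]; rfl

lemma circuitRow2_eq_paper_form (k : ℕ) :
    circuitRow2 k = 1 -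
        ((2 * (((k + 2 : ℕ) : ℚ) - 2) * 3 ^ (2 * k + 1)) / 4 +
            (5 * 3 ^ (2 * k + 1) + (-1 : ℚ) ^ (2 * k)) / 16) /
          ((((3 ^ (k + 1) - 1) / 2 : ℚ)) ^ 2 * (((3 ^ (k + 1) - 1) / 2 : ℚ) + 1) ^ 2 / 2) := by
  have h3 : (3 : ℚ) ^ (2 * k + 1) = 3 * 9 ^ k := by
    rw [pow_succ, pow_mul]; norm_num; ring
  have h9 : ((3 : ℚ) ^ (k + 1)) ^ 2 = 9 * 9 ^ k := by
    rw [← pow_mul, mul_comm, pow_mul]; norm_num; ring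
  have hD : ((3 ^ (k + 1) - 1) / 2 : ℚ) ^ 2 * ((3 ^ (k + 1) - 1) / 2 + 1) ^ 2 / 2 =
      (9 * 9 ^ k - 1) ^ 2 / 32 := by
    rw [← h9]; ring
  rw [circuitRow2, hD, h3, pow_mul, neg_one_sq, one_pow]
  push_cast
  -- keeps `ring` from expanding the common denominator
  generalize ((9 : ℚ) * 9 ^ k - 1) ^ 2 = B
  ring

theorem row2_closed_form (c : ℕ → ℚ) (hc2 : c 2 = 1 / 2)
    (hcrec : ∀ s ≥ 2, c (s + 1) = G₂ (1 - 3 / 9 ^ (s - 1)) (c s)) :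
    ∀ s ≥ 2,
      c s = 1 -
        ((2 * ((s : ℚ) - 2) * 3 ^ (2 * (s - 2) + 1)) / 4 +
            (5 * 3 ^ (2 * (s - 2) + 1) + (-1 : ℚ) ^ (2 * (s - 2))) / 16) /
          ((((3 ^ (s - 1) - 1) / 2 : ℚ)) ^ 2 * (((3 ^ (s - 1) - 1) / 2 : ℚ) + 1) ^ 2 / 2) := by
  intro s hs
  obtain ⟨k, rfl⟩ := Nat.exists_eq_add_of_le' hs
  exact (eq_circuitRow2 c hc2 hcrec k).trans (circuitRow2_eq_paper_form k)
end

section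
/- Define A : ℕ → ℝ by A(s) = (2/3)·∏_{i=2}^{s} (1 − 1/(2i−1)). Then A(s) is asymptotic to √(π/(9s)) as s → ∞; that is, the ratio A(s)/√(π/(9s)) tends to 1 as s tends to infinity. -/
/-! Writing s = k + 1, the product is `∏ i < k, (2i+2)/(2i+3)`, and its square times `2k+1` is the
`k`-th partial product `W k` of Wallis' formula, which tends to `π/2`. Hence
`A(s)² / (π/(9s)) = (2s/(2s-1)) · W(s-1) / (π/2) → 1`, and the claim follows by taking square roots. -/

open Filter Real Finset Topology

lemma prod_Icc_one_sub_one_div_eq_prod_range (k : ℕ) :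
    ∏ i ∈ Icc 2 (k + 1), (1 - 1 / (2 * (i : ℝ) - 1)) =
      ∏ i ∈ range k, (2 * (i : ℝ) + 2) / (2 * i + 3) := by
  rw [show Icc 2 (k + 1) = Ico 2 (k + 2) from rfl, prod_Ico_eq_prod_range, Nat.add_sub_cancel]
  refine prod_congr rfl fun i _ => ?_
  rw [Nat.cast_add, Nat.cast_two, show 2 * (2 + (i : ℝ)) - 1 = 2 * i + 3 by ring]
  field_simp
  ring

lemma Real.Wallis.W_eq_mul_sq (k : ℕ) :
    Real.Wallis.W k = (2 * k + 1) * (∏ i ∈ range k, (2 * (i : ℝ) + 2) / (2 * i + 3)) ^ 2 := by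
  induction k with
  | zero => simp [Real.Wallis.W]
  | succ k ih =>
    rw [Real.Wallis.W_succ, ih, prod_range_succ]
    push_cast
    field_simp
    ring

lemma tendsto_two_mul_add_two_div_two_mul_add_one :
    Tendsto (fun k : ℕ => (2 * (k : ℝ) + 2) / (2 * k + 1)) atTop (𝓝 1) := by
  have h := ((tendsto_natCast_div_add_atTop (1 : ℝ)).comp
    (tendsto_atTop_mono (fun k => Nat.le_succ_of_le (Nat.le_mul_of_pos_left k two_pos)) tendsto_id :
      Tendsto (fun k : ℕ => 2 * k + 1) atTop atTop)).inv₀ one_ne_zero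
  rw [inv_one] at h
  refine h.congr fun k => ?_
  simp only [Function.comp_apply, inv_div]
  push_cast
  ring

theorem A_asymptotic (A : ℕ → ℝ)
    (hA : ∀ s : ℕ, A s = (2 / 3) * ∏ i ∈ Finset.Icc 2 s, (1 - 1 / (2 * (i : ℝ) - 1))) :
    Tendsto (fun s : ℕ => A s / Real.sqrt (Real.pi / (9 * (s : ℝ)))) atTop (nhds 1) := by
  rw [← tendsto_add_atTop_iff_nat 1]
  have hlim := (tendsto_two_mul_add_two_div_two_mul_add_one.mul
    (Real.Wallis.tendsto_W_nhds_pi_div_two.div_const (π / 2))).sqrt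
  rw [div_self pi_div_two_pos.ne', mul_one, sqrt_one] at hlim
  refine hlim.congr fun k => ?_
  have hA_nonneg : 0 ≤ A (k + 1) := by
    rw [hA, prod_Icc_one_sub_one_div_eq_prod_range]
    exact mul_nonneg (by norm_num) (prod_nonneg fun i _ => by positivity)
  have hsq : (2 * (k : ℝ) + 2) / (2 * k + 1) * (Real.Wallis.W k / (π / 2)) =
      A (k + 1) ^ 2 / (π / (9 * (k + 1 : ℕ))) := by
    rw [hA, prod_Icc_one_sub_one_div_eq_prod_range, Real.Wallis.W_eq_mul_sq]
    push_cast
    field_simp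
    ring
  rw [hsq, sqrt_div (sq_nonneg _), sqrt_sq hA_nonneg]
end
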